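/- Let a be a real number and n ≥ 1 an integer. Define ψ_n : (0, π/(2ω)) × ℝ^d → ℂ by ψ_n(t,x) = (cos ωt)^{−d/2} · exp{ (i·m·ω/(2ħ·sin ωt·cos ωt)) · [ −‖x‖²·sin²ωt + 2 x·I(t,0)·cos ωt − 2 J(t,0)·cos ωt + 2 x·I(0,t) − ‖I(0,t)‖² ] } · Σ_{k=0}^{n} C_k(n,a) · exp[ i·(1 − 2k/n)·p·(x − I(0,t))/(ħ·cos ωt) − i·(1 − 2k/n)²·‖p‖²·tan ωt/(2ħmω) ]. Then ψ_n satisfies the driven harmonic oscillator Schrödinger equation iħ·∂ψ_n/∂t + (ħ²/(2m))·Δ_x ψ_n − (1/2)·m·ω²·‖x‖²·ψ_n + (f(t)·x)·ψ_n = 0 at every point of (0, π/(2ω)) × ℝ^d, and for every x ∈ ℝ^d one has lim_{t→0⁺} ψ_n(t,x) = Σ_{k=0}^{n} C_k(n,a)·exp(i·(p·x)·(1 − 2k/n)/ħ). -/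

import Mathlib

/-!
Each summand of `ψ_n` is a Gaussian wave `A(t) · exp(i(α(t)‖x‖² + ⟪β(t), x⟫ + γ(t)))` with
`α = -(mω/2ħ) tan ωt`, `β = (ħ cos ωt)⁻¹ (Q(t) + b p)`, `Q(t) = ∫₀ᵗ cos(ωs) f(s) ds` and
`b = 1 - 2k/n`. Such a wave solves the driven oscillator equation exactly when `(A, α, β, γ)`
solves a Riccati-type system of ODEs, which these coefficients do; the equation is linear, so
`ψ_n` solves it too. Written this way the phase no longer divides by `sin ωt`, so every summand is
continuous at `t = 0`, where it reduces to the plane wave `exp(i b ⟪p, x⟫ / ħ)`.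
-/

open scoped RealInnerProductSpace

/-- Directional derivative of a complex-valued function on `ℝ^d` along `v`. -/
noncomputable def dirDeriv {d : ℕ} (v : EuclideanSpace ℝ (Fin d))
    (g : EuclideanSpace ℝ (Fin d) → ℂ) (x : EuclideanSpace ℝ (Fin d)) : ℂ :=
  deriv (fun r : ℝ => g (x + r • v)) 0

/-- The Laplacian `Δg = ∑_{j=1}^d ∂²g/∂x_j²` of a complex-valued function on `ℝ^d`. -/
noncomputable def laplacian {d : ℕ} (g : EuclideanSpace ℝ (Fin d) → ℂ) :
    EuclideanSpace ℝ (Fin d) → ℂ :=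
  fun x => ∑ j : Fin d,
    dirDeriv (EuclideanSpace.single j (1 : ℝ))
      (dirDeriv (EuclideanSpace.single j (1 : ℝ)) g) x

/-- `I(u,v) = (1/(mω))·∫_v^u f(s)·sin(ω(s−v)) ds ∈ ℝ^d`. -/
noncomputable def Ivec {d : ℕ} (m ω : ℝ) (f : ℝ → EuclideanSpace ℝ (Fin d)) (u v : ℝ) :
    EuclideanSpace ℝ (Fin d) :=
  (1 / (m * ω)) • ∫ s in v..u, Real.sin (ω * (s - v)) • f s

/-- `J(u,v) = (1/(m²ω²))·∫_v^u ∫_v^s (f(s)·f(s'))·sin(ω(u−s))·sin(ω(s'−v)) ds' ds ∈ ℝ`. -/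
noncomputable def Jval {d : ℕ} (m ω : ℝ) (f : ℝ → EuclideanSpace ℝ (Fin d)) (u v : ℝ) : ℝ :=
  (1 / (m ^ 2 * ω ^ 2)) * ∫ s in v..u, ∫ s' in v..s,
    (⟪f s, f s'⟫ : ℝ) * Real.sin (ω * (u - s)) * Real.sin (ω * (s' - v))

local notation "ℝ^" d => EuclideanSpace ℝ (Fin d)

section QuadraticWave

open Complex

variable {E : Type*} [NormedAddCommGroup E] [InnerProductSpace ℝ E]

noncomputable def quadraticWave (α : ℝ) (β : E) (γ : ℝ) (x : E) : ℂ :=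
  exp (I * ((α * ‖x‖ ^ 2 + ⟪β, x⟫ + γ : ℝ) : ℂ))

theorem HasDerivAt.quadraticWave (α : ℝ) (β : E) (γ : ℝ) {c : ℝ → E} {c' : E} {r : ℝ}
    (hc : HasDerivAt c c' r) :
    HasDerivAt (fun r => quadraticWave α β γ (c r))
      (quadraticWave α β γ (c r) * (I * (⟪(2 * α) • c r + β, c'⟫ : ℝ))) r := by
  have hφ : HasDerivAt (fun r => α * ‖c r‖ ^ 2 + ⟪β, c r⟫ + γ)
      ⟪(2 * α) • c r + β, c'⟫ r := by
    refine (((hc.norm_sq.const_mul α).add ((hasDerivAt_const r β).inner ℝ hc)).add_const γ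
      ).congr_deriv ?_
    simp only [inner_add_left, real_inner_smul_left, inner_zero_left]
    ring
  exact (hφ.ofReal_comp.const_mul I).cexp

theorem hasDerivAt_quadraticWave_time {α γ : ℝ → ℝ} {β : ℝ → E} {α' γ' t : ℝ} {β' : E}
    (hα : HasDerivAt α α' t) (hβ : HasDerivAt β β' t) (hγ : HasDerivAt γ γ' t) (x : E) :
    HasDerivAt (fun s => quadraticWave (α s) (β s) (γ s) x)
      (quadraticWave (α t) (β t) (γ t) x * (I * ((α' * ‖x‖ ^ 2 + ⟪β', x⟫ + γ' : ℝ) : ℂ))) t := by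
  have hφ : HasDerivAt (fun s => α s * ‖x‖ ^ 2 + ⟪β s, x⟫ + γ s)
      (α' * ‖x‖ ^ 2 + ⟪β', x⟫ + γ') t := by
    refine (((hα.mul_const _).add (hβ.inner ℝ (hasDerivAt_const t x))).add hγ).congr_deriv ?_
    simp
  exact (hφ.ofReal_comp.const_mul I).cexp

end QuadraticWave

section Laplacian

open Complex

variable {d : ℕ}

theorem dirDeriv_const_mul (c : ℂ) (v : ℝ^d) (g : (ℝ^d) → ℂ) :
    dirDeriv v (fun y => c * g y) = fun y => c * dirDeriv v g y :=
  funext fun _ => deriv_const_mul_field c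

theorem laplacian_const_mul (c : ℂ) (g : (ℝ^d) → ℂ) (x : ℝ^d) :
    laplacian (fun y => c * g y) x = c * laplacian g x := by
  simp only [laplacian, dirDeriv_const_mul, Finset.mul_sum]

theorem dirDeriv_sum {ι : Type*} (s : Finset ι) (c : ι → ℂ) (g : ι → (ℝ^d) → ℂ)
    (v x : ℝ^d) (hg : ∀ k ∈ s, DifferentiableAt ℝ (fun r : ℝ => g k (x + r • v)) 0) :
    dirDeriv v (fun y => ∑ k ∈ s, c k * g k y) x = ∑ k ∈ s, c k * dirDeriv v (g k) x :=
  (HasDerivAt.fun_sum fun k hk => ((hg k hk).hasDerivAt.const_mul (c k))).deriv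

theorem laplacian_sum {ι : Type*} (s : Finset ι) (c : ι → ℂ) (g : ι → (ℝ^d) → ℂ) (x : ℝ^d)
    (hg : ∀ k ∈ s, ∀ j y,
      DifferentiableAt ℝ (fun r : ℝ => g k (y + r • EuclideanSpace.single j 1)) 0)
    (hg' : ∀ k ∈ s, ∀ j, DifferentiableAt ℝ (fun r : ℝ =>
      dirDeriv (EuclideanSpace.single j 1) (g k) (x + r • EuclideanSpace.single j 1)) 0) :
    laplacian (fun y => ∑ k ∈ s, c k * g k y) x = ∑ k ∈ s, c k * laplacian (g k) x := by
  have inner_sum (j : Fin d) : dirDeriv (EuclideanSpace.single j 1) (fun y => ∑ k ∈ s, c k * g k y)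
      = fun y => ∑ k ∈ s, c k * dirDeriv (EuclideanSpace.single j 1) (g k) y :=
    funext fun y => dirDeriv_sum s c g _ y fun k hk => hg k hk j y
  simp only [laplacian, inner_sum, dirDeriv_sum s c _ _ x fun k hk => hg' k hk _, Finset.mul_sum]
  exact Finset.sum_comm

theorem dirDeriv_quadraticWave (α : ℝ) (β : ℝ^d) (γ : ℝ) (v : ℝ^d) :
    dirDeriv v (quadraticWave α β γ)
      = fun y => quadraticWave α β γ y * (I * (⟪(2 * α) • y + β, v⟫ : ℝ)) := by
  funext y
  unfold dirDeriv
  simpa using (((hasDerivAt_id (0 : ℝ)).smul_const v).const_add y).quadraticWave α β γ |>.deriv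

theorem hasDerivAt_dirDeriv_quadraticWave (α : ℝ) (β : ℝ^d) (γ : ℝ) (v x : ℝ^d) :
    HasDerivAt (fun r : ℝ => dirDeriv v (quadraticWave α β γ) (x + r • v))
      (quadraticWave α β γ x
        * (I * (2 * α * ‖v‖ ^ 2 : ℝ) - ((⟪(2 * α) • x + β, v⟫ ^ 2 : ℝ) : ℂ))) 0 := by
  have hline : HasDerivAt (fun r : ℝ => x + r • v) v 0 :=
    ((hasDerivAt_id (0 : ℝ)).smul_const v).const_add x |>.congr_deriv (one_smul ℝ v)
  have hslope : HasDerivAt (fun r : ℝ => ⟪(2 * α) • (x + r • v) + β, v⟫) (2 * α * ‖v‖ ^ 2) 0 := by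
    refine (((hline.const_smul (2 * α)).add_const β).inner ℝ (hasDerivAt_const 0 v)).congr_deriv ?_
    simp [real_inner_smul_left]
  rw [dirDeriv_quadraticWave]
  refine ((hline.quadraticWave α β γ).mul (hslope.ofReal_comp.const_mul I)).congr_deriv ?_
  simp only [zero_smul, add_zero]
  push_cast
  ring_nf
  rw [I_sq]
  ring

theorem laplacian_quadraticWave (α : ℝ) (β : ℝ^d) (γ : ℝ) (x : ℝ^d) :
    laplacian (quadraticWave α β γ) x
      = quadraticWave α β γ x * (2 * α * d * I - (‖(2 * α) • x + β‖ ^ 2 : ℝ)) := by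
  have second (j : Fin d) := (hasDerivAt_dirDeriv_quadraticWave α β γ
    (EuclideanSpace.single j 1) x).deriv
  have parseval (w : ℝ^d) : ∑ j, ⟪w, EuclideanSpace.single j (1 : ℝ)⟫ ^ 2 = ‖w‖ ^ 2 := by
    simp [EuclideanSpace.norm_sq_eq, EuclideanSpace.inner_single_right]
  simp only [dirDeriv] at second
  simp only [laplacian, dirDeriv, second, ← Finset.mul_sum, PiLp.norm_single, norm_one,
    Finset.sum_sub_distrib, ← ofReal_sum, parseval, one_pow, Finset.sum_const,
    Finset.card_univ, Fintype.card_fin, nsmul_eq_mul, mul_one]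
  push_cast
  ring

end Laplacian

noncomputable def drivenOscillatorOp {d : ℕ} (hbar m ω : ℝ) (F : ℝ^d) (u : ℝ → (ℝ^d) → ℂ)
    (t : ℝ) (x : ℝ^d) : ℂ :=
  Complex.I * (hbar : ℂ) * deriv (fun s : ℝ => u s x) t
    + ((hbar : ℂ) ^ 2 / (2 * (m : ℂ))) * laplacian (u t) x
    - (1 / 2) * (m : ℂ) * (ω : ℂ) ^ 2 * ((‖x‖ ^ 2 : ℝ) : ℂ) * u t x
    + ((⟪F, x⟫ : ℝ) : ℂ) * u t x

section DrivenOscillatorOp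

open Complex Filter Topology

variable {d : ℕ} {hbar m ω : ℝ} {F : EuclideanSpace ℝ (Fin d)}

theorem drivenOscillatorOp_congr {u v : ℝ → (ℝ^d) → ℂ} {t : ℝ} (h : ∀ᶠ s in 𝓝 t, u s = v s)
    (x : ℝ^d) : drivenOscillatorOp hbar m ω F u t x = drivenOscillatorOp hbar m ω F v t x := by
  have hx : (fun s => u s x) =ᶠ[𝓝 t] fun s => v s x := h.mono fun s hs => congrFun hs x
  simp only [drivenOscillatorOp, hx.deriv_eq, h.self_of_nhds]

theorem drivenOscillatorOp_sum {ι : Type*} (s : Finset ι) (c : ι → ℂ) (u : ι → ℝ → (ℝ^d) → ℂ)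
    (t : ℝ) (x : ℝ^d) (ht : ∀ k ∈ s, DifferentiableAt ℝ (fun τ => u k τ x) t)
    (hx : ∀ k ∈ s, ∀ j y,
      DifferentiableAt ℝ (fun r : ℝ => u k t (y + r • EuclideanSpace.single j 1)) 0)
    (hx' : ∀ k ∈ s, ∀ j, DifferentiableAt ℝ (fun r : ℝ =>
      dirDeriv (EuclideanSpace.single j 1) (u k t) (x + r • EuclideanSpace.single j 1)) 0) :
    drivenOscillatorOp hbar m ω F (fun τ y => ∑ k ∈ s, c k * u k τ y) t x
      = ∑ k ∈ s, c k * drivenOscillatorOp hbar m ω F (u k) t x := by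
  rw [drivenOscillatorOp, laplacian_sum s c (fun k => u k t) x hx hx', deriv_fun_sum fun k hk =>
    (ht k hk).const_mul (c k)]
  simp only [drivenOscillatorOp, deriv_const_mul_field, Finset.mul_sum, ← Finset.sum_add_distrib,
    ← Finset.sum_sub_distrib]
  refine Finset.sum_congr rfl fun k _ => ?_
  ring

theorem drivenOscillatorOp_quadraticWave (hbar_ne : hbar ≠ 0) (hm : m ≠ 0)
    {A α γ : ℝ → ℝ} {β : ℝ → ℝ^d} {t : ℝ}
    (hA : HasDerivAt A (-(hbar * d / m) * α t * A t) t)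
    (hα : HasDerivAt α (-(2 * hbar / m) * α t ^ 2 - m * ω ^ 2 / (2 * hbar)) t)
    (hβ : HasDerivAt β (-(2 * hbar / m * α t) • β t + hbar⁻¹ • F) t)
    (hγ : HasDerivAt γ (-(hbar / (2 * m)) * ‖β t‖ ^ 2) t) (x : ℝ^d) :
    drivenOscillatorOp hbar m ω F (fun s y => (A s : ℂ) * quadraticWave (α s) (β s) (γ s) y) t x
      = 0 := by
  -- After dividing by the wave, the imaginary part cancels by `hA` and the real part is `hreal`.
  have htime := hA.ofReal_comp.fun_mul (hasDerivAt_quadraticWave_time hα hβ hγ x)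
  set φ' : ℝ := (-(2 * hbar / m) * α t ^ 2 - m * ω ^ 2 / (2 * hbar)) * ‖x‖ ^ 2
    + ⟪-(2 * hbar / m * α t) • β t + hbar⁻¹ • F, x⟫ + -(hbar / (2 * m)) * ‖β t‖ ^ 2 with hφ'
  have hreal : hbar * φ' + hbar ^ 2 / (2 * m) * ‖(2 * α t) • x + β t‖ ^ 2
      + m * ω ^ 2 / 2 * ‖x‖ ^ 2 - ⟪F, x⟫ = 0 := by
    simp only [hφ', inner_add_left, real_inner_smul_left, norm_add_sq_real, norm_smul,
      Real.norm_eq_abs, mul_pow, sq_abs, real_inner_comm (β t) x]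
    field_simp
    ring
  rw [drivenOscillatorOp, htime.deriv, laplacian_const_mul, laplacian_quadraticWave]
  have hC := congrArg ofReal hreal
  push_cast at hC ⊢
  linear_combination (-(A t : ℂ) * quadraticWave (α t) (β t) (γ t) x) * hC
    + ((hbar : ℂ) * A t * quadraticWave (α t) (β t) (γ t) x * φ') * I_sq

namespace DrivenOscillator

open Complex Filter Topology

variable {d : ℕ}

noncomputable def sinMoment (ω : ℝ) (f : ℝ → ℝ^d) (t : ℝ) : ℝ^d :=
  ∫ s in (0 : ℝ)..t, Real.sin (ω * s) • f s

noncomputable def cosMoment (ω : ℝ) (f : ℝ → ℝ^d) (t : ℝ) : ℝ^d :=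
  ∫ s in (0 : ℝ)..t, Real.cos (ω * s) • f s

noncomputable def crossMoment (ω : ℝ) (f : ℝ → ℝ^d) (t : ℝ) : ℝ :=
  ∫ s in (0 : ℝ)..t, Real.cos (ω * s) * ⟪f s, sinMoment ω f s⟫

variable {ω : ℝ} {f : ℝ → ℝ^d}

theorem hasDerivAt_sinMoment (hf : Continuous f) (t : ℝ) :
    HasDerivAt (sinMoment ω f) (Real.sin (ω * t) • f t) t :=
  ((by fun_prop : Continuous fun s => Real.sin (ω * s) • f s).integral_hasStrictDerivAt 0 t
    ).hasDerivAt

theorem hasDerivAt_cosMoment (hf : Continuous f) (t : ℝ) :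
    HasDerivAt (cosMoment ω f) (Real.cos (ω * t) • f t) t :=
  ((by fun_prop : Continuous fun s => Real.cos (ω * s) • f s).integral_hasStrictDerivAt 0 t
    ).hasDerivAt

theorem continuous_sinMoment (hf : Continuous f) : Continuous (sinMoment ω f) :=
  continuous_iff_continuousAt.2 fun t => (hasDerivAt_sinMoment hf t).continuousAt

theorem hasDerivAt_crossMoment (hf : Continuous f) (t : ℝ) :
    HasDerivAt (crossMoment ω f) (Real.cos (ω * t) * ⟪f t, sinMoment ω f t⟫) t := by
  have := continuous_sinMoment (ω := ω) hf
  exact ((by fun_prop : Continuous fun s => Real.cos (ω * s) * ⟪f s, sinMoment ω f s⟫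
    ).integral_hasStrictDerivAt 0 t).hasDerivAt

theorem integral_sin_mul_inner_sinMoment (hf : Continuous f) (t : ℝ) :
    ∫ s in (0 : ℝ)..t, Real.sin (ω * s) * ⟪f s, sinMoment ω f s⟫ = ‖sinMoment ω f t‖ ^ 2 / 2 := by
  have hP := continuous_sinMoment (ω := ω) hf
  have hderiv (s : ℝ) : HasDerivAt (fun s => ‖sinMoment ω f s‖ ^ 2 / 2)
      (Real.sin (ω * s) * ⟪f s, sinMoment ω f s⟫) s := by
    refine ((hasDerivAt_sinMoment hf s).norm_sq.div_const 2).congr_deriv ?_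
    rw [real_inner_smul_right, real_inner_comm]
    ring
  rw [intervalIntegral.integral_eq_sub_of_hasDerivAt (fun s _ => hderiv s)
    ((by fun_prop : Continuous _).intervalIntegrable _ _)]
  simp [sinMoment]

variable {m : ℝ}

theorem Ivec_left_zero (t : ℝ) : Ivec m ω f t 0 = (1 / (m * ω)) • sinMoment ω f t := by
  simp [Ivec, sinMoment]

theorem Ivec_zero_right (hf : Continuous f) (t : ℝ) :
    Ivec m ω f 0 t = (1 / (m * ω)) •
      (Real.sin (ω * t) • cosMoment ω f t - Real.cos (ω * t) • sinMoment ω f t) := by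
  have hsplit (s : ℝ) : Real.sin (ω * (s - t)) • f s
      = Real.cos (ω * t) • (Real.sin (ω * s) • f s)
        - Real.sin (ω * t) • (Real.cos (ω * s) • f s) := by
    rw [smul_smul, smul_smul, ← sub_smul, mul_sub, Real.sin_sub]
    ring_nf
  rw [Ivec, intervalIntegral.integral_symm]
  simp only [hsplit]
  rw [intervalIntegral.integral_sub ((by fun_prop : Continuous _).intervalIntegrable _ _)
      ((by fun_prop : Continuous _).intervalIntegrable _ _),
    intervalIntegral.integral_smul, intervalIntegral.integral_smul, ← sinMoment, ← cosMoment,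
    neg_sub]

theorem Jval_left_zero (hf : Continuous f) (t : ℝ) :
    Jval m ω f t 0 = (1 / (m ^ 2 * ω ^ 2)) * (Real.sin (ω * t) * crossMoment ω f t
      - Real.cos (ω * t) * (‖sinMoment ω f t‖ ^ 2 / 2)) := by
  have hP := continuous_sinMoment (ω := ω) hf
  have hinner (s : ℝ) : ∫ s' in (0 : ℝ)..s,
        ⟪f s, f s'⟫ * Real.sin (ω * (t - s)) * Real.sin (ω * (s' - 0))
      = Real.sin (ω * t) * (Real.cos (ω * s) * ⟪f s, sinMoment ω f s⟫)
        - Real.cos (ω * t) * (Real.sin (ω * s) * ⟪f s, sinMoment ω f s⟫) := by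
    have hcomm := (innerSL ℝ (f s)).intervalIntegral_comp_comm (μ := MeasureTheory.volume)
      ((by fun_prop : Continuous fun s' => Real.sin (ω * s') • f s').intervalIntegrable 0 s)
    simp only [innerSL_apply_apply, real_inner_smul_right] at hcomm
    have hintegrand (s' : ℝ) : ⟪f s, f s'⟫ * Real.sin (ω * (t - s)) * Real.sin (ω * (s' - 0))
        = Real.sin (ω * (t - s)) * (Real.sin (ω * s') * ⟪f s, f s'⟫) := by
      rw [sub_zero]; ring
    rw [intervalIntegral.integral_congr fun s' _ => hintegrand s',
      intervalIntegral.integral_const_mul, hcomm, ← sinMoment, mul_sub, Real.sin_sub]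
    ring
  rw [Jval]
  simp only [hinner]
  rw [intervalIntegral.integral_sub ((by fun_prop : Continuous _).intervalIntegrable _ _)
      ((by fun_prop : Continuous _).intervalIntegrable _ _),
    intervalIntegral.integral_const_mul, intervalIntegral.integral_const_mul,
    integral_sin_mul_inner_sinMoment hf, ← crossMoment]

noncomputable def modeAmplitude (d : ℕ) (ω t : ℝ) : ℝ := Real.cos (ω * t) ^ (-(d : ℝ) / 2)

noncomputable def modeWidth (hbar m ω t : ℝ) : ℝ := -(m * ω / (2 * hbar)) * Real.tan (ω * t)

noncomputable def modeMomentum (hbar ω : ℝ) (V : ℝ → ℝ^d) (t : ℝ) : ℝ^d :=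
  (hbar * Real.cos (ω * t))⁻¹ • V t

noncomputable def modePhase (hbar m ω : ℝ) (f V : ℝ → ℝ^d) (t : ℝ) : ℝ :=
  (hbar * m * ω)⁻¹ *
    (⟪sinMoment ω f t, V t⟫ - crossMoment ω f t - Real.tan (ω * t) * ‖V t‖ ^ 2 / 2)

/-- `V` stands for a primitive of `cos (ω ·) • f`; the `k`-th summand of `ψ_n` is
`C_k(n,a) • mode hbar m ω f (cosMoment ω f + (1 - 2k/n) • p)`. -/
noncomputable def mode (hbar m ω : ℝ) (f V : ℝ → ℝ^d) (t : ℝ) (x : ℝ^d) : ℂ :=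
  (modeAmplitude d ω t : ℂ) * quadraticWave (modeWidth hbar m ω t) (modeMomentum hbar ω V t)
    (modePhase hbar m ω f V t) x

variable {hbar : ℝ} {V : ℝ → ℝ^d} {t : ℝ}

theorem hasDerivAt_cos_mul (ω t : ℝ) :
    HasDerivAt (fun s => Real.cos (ω * s)) (-(ω * Real.sin (ω * t))) t :=
  ((Real.hasDerivAt_cos _).comp t ((hasDerivAt_id t).const_mul ω)).congr_deriv (by simp [mul_comm])

theorem hasDerivAt_tan_mul (hc : Real.cos (ω * t) ≠ 0) :
    HasDerivAt (fun s => Real.tan (ω * s)) (ω / Real.cos (ω * t) ^ 2) t :=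
  ((Real.hasDerivAt_tan hc).comp t ((hasDerivAt_id t).const_mul ω)).congr_deriv (by ring)

theorem hasDerivAt_modeAmplitude (hbar_ne : hbar ≠ 0) (hm : m ≠ 0) (hc : Real.cos (ω * t) ≠ 0) :
    HasDerivAt (modeAmplitude d ω) (-(hbar * d / m) * modeWidth hbar m ω t * modeAmplitude d ω t)
      t := by
  refine ((Real.hasDerivAt_rpow_const (p := -(d : ℝ) / 2) (Or.inl hc)).comp t
    (hasDerivAt_cos_mul ω t)).congr_deriv ?_
  rw [Real.rpow_sub_one hc, modeWidth, modeAmplitude, Real.tan_eq_sin_div_cos]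
  field_simp

theorem hasDerivAt_modeWidth (hbar_ne : hbar ≠ 0) (hm : m ≠ 0) (hc : Real.cos (ω * t) ≠ 0) :
    HasDerivAt (modeWidth hbar m ω)
      (-(2 * hbar / m) * modeWidth hbar m ω t ^ 2 - m * ω ^ 2 / (2 * hbar)) t := by
  refine ((hasDerivAt_tan_mul hc).const_mul _).congr_deriv ?_
  have := Real.sin_sq_add_cos_sq (ω * t)
  rw [modeWidth, Real.tan_eq_sin_div_cos]
  field_simp
  linear_combination ω ^ 2 * this

theorem hasDerivAt_modeMomentum (hbar_ne : hbar ≠ 0) (hm : m ≠ 0) (hc : Real.cos (ω * t) ≠ 0)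
    (hV : HasDerivAt V (Real.cos (ω * t) • f t) t) :
    HasDerivAt (modeMomentum hbar ω V)
      (-(2 * hbar / m * modeWidth hbar m ω t) • modeMomentum hbar ω V t + hbar⁻¹ • f t) t := by
  refine ((((hasDerivAt_cos_mul ω t).const_mul hbar).inv (by simp [hbar_ne, hc])).smul hV
    ).congr_deriv ?_
  simp only [modeMomentum, modeWidth, Real.tan_eq_sin_div_cos, smul_smul, Pi.inv_apply]
  match_scalars <;> field_simp

theorem hasDerivAt_modePhase (hbar_ne : hbar ≠ 0) (hm : m ≠ 0) (hω : ω ≠ 0)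
    (hc : Real.cos (ω * t) ≠ 0) (hf : Continuous f) (hV : HasDerivAt V (Real.cos (ω * t) • f t) t) :
    HasDerivAt (modePhase hbar m ω f V) (-(hbar / (2 * m)) * ‖modeMomentum hbar ω V t‖ ^ 2) t := by
  refine (((((hasDerivAt_sinMoment hf t).inner ℝ hV).sub (hasDerivAt_crossMoment hf t)).sub
    (((hasDerivAt_tan_mul hc).mul hV.norm_sq).div_const 2)).const_mul _).congr_deriv ?_
  simp only [modeMomentum, norm_smul, mul_pow, Real.norm_eq_abs, sq_abs, real_inner_smul_left,
    real_inner_smul_right, Real.tan_eq_sin_div_cos, real_inner_comm (f t)]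
  field_simp
  ring

theorem drivenOscillatorOp_mode (hbar_ne : hbar ≠ 0) (hm : m ≠ 0) (hω : ω ≠ 0)
    (hc : Real.cos (ω * t) ≠ 0) (hf : Continuous f) (hV : HasDerivAt V (Real.cos (ω * t) • f t) t)
    (x : ℝ^d) : drivenOscillatorOp hbar m ω (f t) (mode hbar m ω f V) t x = 0 :=
  drivenOscillatorOp_quadraticWave hbar_ne hm (hasDerivAt_modeAmplitude hbar_ne hm hc)
    (hasDerivAt_modeWidth hbar_ne hm hc) (hasDerivAt_modeMomentum hbar_ne hm hc hV)
    (hasDerivAt_modePhase hbar_ne hm hω hc hf hV) x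

theorem differentiableAt_mode_time (hbar_ne : hbar ≠ 0) (hm : m ≠ 0) (hω : ω ≠ 0)
    (hc : Real.cos (ω * t) ≠ 0) (hf : Continuous f) (hV : HasDerivAt V (Real.cos (ω * t) • f t) t)
    (x : ℝ^d) : DifferentiableAt ℝ (fun s => mode hbar m ω f V s x) t :=
  ((hasDerivAt_modeAmplitude hbar_ne hm hc).ofReal_comp.mul
    (hasDerivAt_quadraticWave_time (hasDerivAt_modeWidth hbar_ne hm hc)
      (hasDerivAt_modeMomentum hbar_ne hm hc hV) (hasDerivAt_modePhase hbar_ne hm hω hc hf hV)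
      x)).differentiableAt

theorem differentiableAt_mode_line (t : ℝ) (v y : ℝ^d) :
    DifferentiableAt ℝ (fun r : ℝ => mode hbar m ω f V t (y + r • v)) 0 :=
  ((((hasDerivAt_id (0 : ℝ)).smul_const v).const_add y).quadraticWave _ _ _
    ).differentiableAt.const_mul _

theorem differentiableAt_dirDeriv_mode_line (t : ℝ) (v x : ℝ^d) :
    DifferentiableAt ℝ (fun r : ℝ => dirDeriv v (mode hbar m ω f V t) (x + r • v)) 0 := by
  unfold mode
  rw [dirDeriv_const_mul]
  exact (hasDerivAt_dirDeriv_quadraticWave _ _ _ v x).differentiableAt.const_mul _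

theorem mode_zero (x : ℝ^d) :
    mode hbar m ω f V 0 x = exp (I * ((⟪V 0, x⟫ / hbar : ℝ) : ℂ)) := by
  simp [mode, modeAmplitude, modeWidth, modeMomentum, modePhase, quadraticWave, sinMoment,
    crossMoment, real_inner_smul_left, div_eq_inv_mul]

theorem tendsto_mode_zero (hbar_ne : hbar ≠ 0) (hm : m ≠ 0) (hω : ω ≠ 0) (hf : Continuous f)
    (hV : HasDerivAt V (Real.cos (ω * 0) • f 0) 0) (x : ℝ^d) :
    Tendsto (fun t => mode hbar m ω f V t x) (𝓝 0) (𝓝 (exp (I * ((⟪V 0, x⟫ / hbar : ℝ) : ℂ)))) := by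
  rw [← mode_zero]
  exact (differentiableAt_mode_time hbar_ne hm hω (by simp) hf hV x).continuousAt.tendsto

theorem mode_eq (hbar_ne : hbar ≠ 0) (hm : m ≠ 0) (hω : ω ≠ 0) (hs : Real.sin (ω * t) ≠ 0)
    (hc : Real.cos (ω * t) ≠ 0) (hf : Continuous f) (b : ℝ) (p x : ℝ^d) :
    mode hbar m ω f (fun s => cosMoment ω f s + b • p) t x
      = ((Real.cos (ω * t) ^ (-(d : ℝ) / 2) : ℝ) : ℂ)
        * exp (I * (((m * ω / (2 * hbar * Real.sin (ω * t) * Real.cos (ω * t))) *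
            (-‖x‖ ^ 2 * Real.sin (ω * t) ^ 2
              + 2 * ⟪x, Ivec m ω f t 0⟫ * Real.cos (ω * t)
              - 2 * Jval m ω f t 0 * Real.cos (ω * t)
              + 2 * ⟪x, Ivec m ω f 0 t⟫
              - ‖Ivec m ω f 0 t‖ ^ 2) : ℝ) : ℂ))
        * exp (I * ((b * ⟪p, x - Ivec m ω f 0 t⟫ / (hbar * Real.cos (ω * t))
            - b ^ 2 * ‖p‖ ^ 2 * Real.tan (ω * t) / (2 * hbar * m * ω) : ℝ) : ℂ)) := by
  rw [mul_assoc, ← exp_add, ← mul_add, ← ofReal_add, mode, modeAmplitude, quadraticWave]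
  congr 4
  rw [Ivec_left_zero, Ivec_zero_right hf, Jval_left_zero hf, modeWidth, modeMomentum, modePhase]
  simp only [Real.tan_eq_sin_div_cos, inner_sub_right, inner_add_left, inner_add_right,
    real_inner_smul_right, real_inner_smul_left, norm_smul, Real.norm_eq_abs,
    norm_sub_sq_real, norm_add_sq_real, mul_pow, sq_abs, abs_mul, abs_div, abs_one, div_pow,
    one_pow]
  rw [real_inner_comm (cosMoment ω f t) x, real_inner_comm (cosMoment ω f t) (sinMoment ω f t),
    real_inner_comm (sinMoment ω f t) p, real_inner_comm (cosMoment ω f t) p]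
  field_simp
  ring

theorem sin_pos_and_cos_pos_of_mem_Ioo (hω : 0 < ω) (ht : t ∈ Set.Ioo 0 (Real.pi / (2 * ω))) :
    0 < Real.sin (ω * t) ∧ 0 < Real.cos (ω * t) := by
  have hωt : ω * t < Real.pi / 2 := by
    have := mul_lt_mul_of_pos_left ht.2 hω
    rwa [mul_div_assoc', mul_comm 2 ω, mul_div_mul_left _ _ hω.ne'] at this
  have hωt₀ : 0 < ω * t := mul_pos hω ht.1
  exact ⟨Real.sin_pos_of_pos_of_lt_pi hωt₀ (by linarith [Real.pi_pos]),
    Real.cos_pos_of_mem_Ioo ⟨by linarith, hωt⟩⟩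

end DrivenOscillator

open DrivenOscillator Filter Topology

theorem driven_oscillator_superoscillating_solution_general
    (hbar m ω : ℝ) (hhbar : 0 < hbar) (hm : 0 < m) (hω : 0 < ω)
    (d : ℕ) (p : EuclideanSpace ℝ (Fin d))
    (f : ℝ → EuclideanSpace ℝ (Fin d)) (hf : Continuous f) (a : ℝ)
    (n : ℕ)
    (ψ : ℝ → EuclideanSpace ℝ (Fin d) → ℂ)
    (hψ : ∀ (t : ℝ) (x : EuclideanSpace ℝ (Fin d)),
      ψ t x = ((Real.cos (ω * t) ^ (-(d : ℝ) / 2) : ℝ) : ℂ)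
        * Complex.exp (Complex.I *
            (((m * ω / (2 * hbar * Real.sin (ω * t) * Real.cos (ω * t))) *
              (-‖x‖ ^ 2 * Real.sin (ω * t) ^ 2
                + 2 * (⟪x, Ivec m ω f t 0⟫ : ℝ) * Real.cos (ω * t)
                - 2 * Jval m ω f t 0 * Real.cos (ω * t)
                + 2 * (⟪x, Ivec m ω f 0 t⟫ : ℝ)
                - ‖Ivec m ω f 0 t‖ ^ 2) : ℝ) : ℂ))
        * ∑ k ∈ Finset.range (n + 1),
            ((n.choose k : ℂ) * (((1 + a) / 2 : ℝ) : ℂ) ^ (n - k)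
                * (((1 - a) / 2 : ℝ) : ℂ) ^ k)
              * Complex.exp (Complex.I *
                  ((((1 - 2 * (k : ℝ) / (n : ℝ)) * (⟪p, x - Ivec m ω f 0 t⟫ : ℝ)
                        / (hbar * Real.cos (ω * t))
                      - (1 - 2 * (k : ℝ) / (n : ℝ)) ^ 2 * ‖p‖ ^ 2 * Real.tan (ω * t)
                        / (2 * hbar * m * ω)) : ℝ) : ℂ))) :
    (∀ t ∈ Set.Ioo (0 : ℝ) (Real.pi / (2 * ω)), ∀ x : EuclideanSpace ℝ (Fin d),
      Complex.I * (hbar : ℂ) * deriv (fun s : ℝ => ψ s x) t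
        + ((hbar : ℂ) ^ 2 / (2 * (m : ℂ))) * laplacian (ψ t) x
        - (1 / 2) * (m : ℂ) * (ω : ℂ) ^ 2 * ((‖x‖ ^ 2 : ℝ) : ℂ) * ψ t x
        + ((⟪f t, x⟫ : ℝ) : ℂ) * ψ t x = 0)
    ∧ ∀ x : EuclideanSpace ℝ (Fin d),
        Filter.Tendsto (fun t : ℝ => ψ t x) (nhdsWithin 0 (Set.Ioi 0))
          (nhds (∑ k ∈ Finset.range (n + 1),
            ((n.choose k : ℂ) * (((1 + a) / 2 : ℝ) : ℂ) ^ (n - k)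
                * (((1 - a) / 2 : ℝ) : ℂ) ^ k)
              * Complex.exp (Complex.I * (((⟪p, x⟫ : ℝ)
                  * (1 - 2 * (k : ℝ) / (n : ℝ)) / hbar : ℝ) : ℂ)))) := by
  set c : ℕ → ℂ := fun k => (n.choose k : ℂ) * (((1 + a) / 2 : ℝ) : ℂ) ^ (n - k)
    * (((1 - a) / 2 : ℝ) : ℂ) ^ k
  set V : ℕ → ℝ → ℝ^d :=
    fun k s => cosMoment ω f s + (1 - 2 * (k : ℝ) / n) • p
  have hV (k : ℕ) (s : ℝ) : HasDerivAt (V k) (Real.cos (ω * s) • f s) s :=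
    (hasDerivAt_cosMoment hf s).add_const _
  have hψ_modes : ∀ t ∈ Set.Ioo 0 (Real.pi / (2 * ω)),
      ψ t = fun y => ∑ k ∈ Finset.range (n + 1), c k * mode hbar m ω f (V k) t y := by
    intro t ht
    obtain ⟨hs, hc⟩ := sin_pos_and_cos_pos_of_mem_Ioo hω ht
    funext y
    simp only [hψ, Finset.mul_sum, V, mode_eq hhbar.ne' hm.ne' hω.ne' hs.ne' hc.ne' hf]
    exact Finset.sum_congr rfl fun k _ => by ring
  refine ⟨fun t ht x => ?_, fun x => ?_⟩
  · have hc := (sin_pos_and_cos_pos_of_mem_Ioo hω ht).2.ne'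
    change drivenOscillatorOp hbar m ω (f t) ψ t x = 0
    rw [drivenOscillatorOp_congr (eventually_of_mem (isOpen_Ioo.mem_nhds ht) hψ_modes),
      drivenOscillatorOp_sum _ _ _ _ _
        (fun k _ => differentiableAt_mode_time hhbar.ne' hm.ne' hω.ne' hc hf (hV k t) x)
        (fun _ _ _ _ => differentiableAt_mode_line _ _ _)
        (fun _ _ _ => differentiableAt_dirDeriv_mode_line _ _ _)]
    exact Finset.sum_eq_zero fun k _ => by
      rw [drivenOscillatorOp_mode hhbar.ne' hm.ne' hω.ne' hc hf (hV k t), mul_zero]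
  · have hψ_near : (fun t => ψ t x) =ᶠ[𝓝[>] 0]
        fun s => ∑ k ∈ Finset.range (n + 1), c k * mode hbar m ω f (V k) s x :=
      eventually_of_mem (Ioo_mem_nhdsGT (by positivity)) fun t ht => congrFun (hψ_modes t ht) x
    have hlim := tendsto_finsetSum (Finset.range (n + 1)) fun k _ =>
      (tendsto_mode_zero hhbar.ne' hm.ne' hω.ne' hf (hV k 0) x).const_mul (c k)
    convert (hlim.mono_left nhdsWithin_le_nhds).congr' hψ_near.symm using 2
    refine Finset.sum_congr rfl fun k _ => ?_
    simp only [c, V, cosMoment, intervalIntegral.integral_same, zero_add, real_inner_smul_left]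
    ring_nf

/-- Fix `ħ > 0`, `m > 0`, `ω > 0`, `d ≥ 1`, `p ∈ ℝ^d`, a continuous
`f : ℝ → ℝ^d`, a real `a` and an integer `n ≥ 1`.  The function
`ψ_n(t,x) = (cos ωt)^{−d/2}·exp{(imω/(2ħ sin ωt cos ωt))·[−‖x‖² sin²ωt + 2x·I(t,0)cos ωt
− 2J(t,0)cos ωt + 2x·I(0,t) − ‖I(0,t)‖²]}·∑_{k=0}^{n} C_k(n,a)·
exp[i(1−2k/n)p·(x−I(0,t))/(ħ cos ωt) − i(1−2k/n)²‖p‖² tan ωt/(2ħmω)]` satisfies the driven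
harmonic oscillator Schrödinger equation on `(0, π/(2ω)) × ℝ^d`, and as `t → 0⁺` it tends to
the superoscillating initial datum `∑_{k=0}^n C_k(n,a)·exp(i(p·x)(1−2k/n)/ħ)`. -/
theorem driven_oscillator_superoscillating_solution
    (hbar m ω : ℝ) (hhbar : 0 < hbar) (hm : 0 < m) (hω : 0 < ω)
    (d : ℕ) (hd : 1 ≤ d) (p : EuclideanSpace ℝ (Fin d))
    (f : ℝ → EuclideanSpace ℝ (Fin d)) (hf : Continuous f) (a : ℝ)
    (n : ℕ) (hn : 1 ≤ n)
    (ψ : ℝ → EuclideanSpace ℝ (Fin d) → ℂ)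
    (hψ : ∀ (t : ℝ) (x : EuclideanSpace ℝ (Fin d)),
      ψ t x = ((Real.cos (ω * t) ^ (-(d : ℝ) / 2) : ℝ) : ℂ)
        * Complex.exp (Complex.I *
            (((m * ω / (2 * hbar * Real.sin (ω * t) * Real.cos (ω * t))) *
              (-‖x‖ ^ 2 * Real.sin (ω * t) ^ 2
                + 2 * (⟪x, Ivec m ω f t 0⟫ : ℝ) * Real.cos (ω * t)
                - 2 * Jval m ω f t 0 * Real.cos (ω * t)
                + 2 * (⟪x, Ivec m ω f 0 t⟫ : ℝ)
                - ‖Ivec m ω f 0 t‖ ^ 2) : ℝ) : ℂ))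
        * ∑ k ∈ Finset.range (n + 1),
            ((n.choose k : ℂ) * (((1 + a) / 2 : ℝ) : ℂ) ^ (n - k)
                * (((1 - a) / 2 : ℝ) : ℂ) ^ k)
              * Complex.exp (Complex.I *
                  ((((1 - 2 * (k : ℝ) / (n : ℝ)) * (⟪p, x - Ivec m ω f 0 t⟫ : ℝ)
                        / (hbar * Real.cos (ω * t))
                      - (1 - 2 * (k : ℝ) / (n : ℝ)) ^ 2 * ‖p‖ ^ 2 * Real.tan (ω * t)
                        / (2 * hbar * m * ω)) : ℝ) : ℂ))) :
    (∀ t ∈ Set.Ioo (0 : ℝ) (Real.pi / (2 * ω)), ∀ x : EuclideanSpace ℝ (Fin d),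
      Complex.I * (hbar : ℂ) * deriv (fun s : ℝ => ψ s x) t
        + ((hbar : ℂ) ^ 2 / (2 * (m : ℂ))) * laplacian (ψ t) x
        - (1 / 2) * (m : ℂ) * (ω : ℂ) ^ 2 * ((‖x‖ ^ 2 : ℝ) : ℂ) * ψ t x
        + ((⟪f t, x⟫ : ℝ) : ℂ) * ψ t x = 0)
    ∧ ∀ x : EuclideanSpace ℝ (Fin d),
        Filter.Tendsto (fun t : ℝ => ψ t x) (nhdsWithin 0 (Set.Ioi 0))
          (nhds (∑ k ∈ Finset.range (n + 1),
            ((n.choose k : ℂ) * (((1 + a) / 2 : ℝ) : ℂ) ^ (n - k)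
                * (((1 - a) / 2 : ℝ) : ℂ) ^ k)
              * Complex.exp (Complex.I * (((⟪p, x⟫ : ℝ)
                  * (1 - 2 * (k : ℝ) / (n : ℝ)) / hbar : ℝ) : ℂ)))) :=
  driven_oscillator_superoscillating_solution_general hbar m ω hhbar hm hω d p f hf a n ψ hψ
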